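/- Let a group G act by isometries on a δ-hyperbolic geodesic metric space H with minimal displacement strictly greater than 3δ. Then G acts freely on the collection of finite nonempty subsets of H: if X ⊆ H is finite and nonempty and g ∈ G satisfies g·X = X, then g = 1. -/

import Mathlib

open Pointwise

/-- The Gromov product `⟨x,y⟩_w`. -/
noncomputable def gromovProd {H : Type*} [MetricSpace H] (w x y : H) : ℝ :=
  (dist x w + dist y w - dist x y) / 2

/-- `f` is a unit-speed geodesic parametrization of a segment from `x` to `y`. -/
def IsGeodesicParam {H : Type*} [MetricSpace H] (x y : H) (f : ℝ → H) : Prop :=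
  f 0 = x ∧ f (dist x y) = y ∧
    ∀ s ∈ Set.Icc (0:ℝ) (dist x y), ∀ t ∈ Set.Icc (0:ℝ) (dist x y),
      dist (f s) (f t) = |s - t|

/-- A geodesic metric space: any two points are joined by a geodesic segment. -/
def IsGeodesicSpace (H : Type*) [MetricSpace H] : Prop :=
  ∀ x y : H, ∃ f : ℝ → H, IsGeodesicParam x y f

/-- All geodesic triangles are `δ`-thin. -/
def ThinTriangles (H : Type*) [MetricSpace H] (δ : ℝ) : Prop :=
  ∀ (r p q : H) (fp fq : ℝ → H), IsGeodesicParam r p fp → IsGeodesicParam r q fq →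
    ∀ t ∈ Set.Icc (0:ℝ) (gromovProd r p q), dist (fp t) (fq t) ≤ δ

/-- A `δ`-hyperbolic geodesic metric space. -/
def IsDeltaHyperbolic (H : Type*) [MetricSpace H] (δ : ℝ) : Prop :=
  IsGeodesicSpace H ∧ ThinTriangles H δ ∧
    ∀ w x y z : H, min (gromovProd w x y) (gromovProd w y z) - δ ≤ gromovProd w x z

/-!
If a ball `B(p, R)` contains `X`, so does `B(g • p, R)`, and thinness of the triangle
`p, g • p, s` for `s ∈ X` puts `X` inside the ball of radius `R - d(p, g • p)/2 + δ` around the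
midpoint of `[p, g • p]`. Applied to a ball of radius within `δ/2` of the optimal one (within `0`
when `δ = 0`, using the midpoint of a diametral pair), this forces `d(p, g • p) ≤ 3δ`.
-/

open Metric

variable {H : Type*} [MetricSpace H]

lemma IsGeodesicParam.symm {x y : H} {f : ℝ → H} (h : IsGeodesicParam x y f) :
    IsGeodesicParam y x (fun t => f (dist x y - t)) := by
  obtain ⟨h0, h1, hd⟩ := h
  refine ⟨by simpa using h1, by rw [dist_comm y x]; simpa using h0, ?_⟩
  intro s hs t ht
  rw [dist_comm y x] at hs ht
  rw [hd _ ⟨by linarith [hs.2], by linarith [hs.1]⟩ _ ⟨by linarith [ht.2], by linarith [ht.1]⟩,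
    abs_sub_comm]
  ring_nf

namespace ThinTriangles

variable {δ : ℝ}

lemma nonneg (hthin : ThinTriangles H δ) (hgeo : IsGeodesicSpace H) (x : H) : 0 ≤ δ := by
  obtain ⟨f, hf⟩ := hgeo x x
  simpa using hthin x x x f f hf hf 0 ⟨le_rfl, by simp [gromovProd]⟩

lemma dist_le_of_le_gromovProd (hthin : ThinTriangles H δ) (hgeo : IsGeodesicSpace H)
    {p q : H} (s : H) {f : ℝ → H} (hf : IsGeodesicParam p q f) {t : ℝ} (ht₀ : 0 ≤ t)
    (ht : t ≤ gromovProd p q s) :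
    dist (f t) s ≤ dist p s - t + δ := by
  obtain ⟨f', hf'⟩ := hgeo p s
  have hts : t ≤ dist p s := by
    have := dist_triangle_right p q s
    simp only [gromovProd, dist_comm] at ht this ⊢
    linarith
  have hf't : dist (f' t) s = dist p s - t := by
    have := hf'.2.2 t ⟨ht₀, hts⟩ (dist p s) ⟨dist_nonneg, le_rfl⟩
    rw [hf'.2.1, abs_of_nonpos (by linarith)] at this
    linarith
  calc dist (f t) s ≤ dist (f t) (f' t) + dist (f' t) s := dist_triangle _ _ _
    _ ≤ δ + (dist p s - t) := by
        rw [hf't]; linarith [hthin p q s f f' hf hf' t ⟨ht₀, ht⟩]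
    _ = dist p s - t + δ := by ring

lemma dist_midpoint_le (hthin : ThinTriangles H δ) (hgeo : IsGeodesicSpace H)
    {p q : H} (s : H) {f : ℝ → H} (hf : IsGeodesicParam p q f) {R : ℝ}
    (hp : dist p s ≤ R) (hq : dist q s ≤ R) :
    dist (f (dist p q / 2)) s ≤ R - dist p q / 2 + δ := by
  have hpq := dist_triangle_right p q s
  -- Run the geodesic from whichever endpoint is farther from `s`.
  rcases le_total (dist q s) (dist p s) with h | h
  · have := hthin.dist_le_of_le_gromovProd hgeo s hf (t := dist p q / 2) (by positivity)
      (by rw [gromovProd, dist_comm q p, dist_comm s p]; linarith)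
    linarith
  · have := hthin.dist_le_of_le_gromovProd hgeo s hf.symm (t := dist p q / 2) (by positivity)
      (by rw [gromovProd, dist_comm s q]; linarith)
    rw [show dist p q - dist p q / 2 = dist p q / 2 by ring] at this
    linarith

end ThinTriangles

def IsAlmostMinimalBall (X : Set H) (ε R : ℝ) (p : H) : Prop :=
  X ⊆ closedBall p R ∧ ∀ q R', X ⊆ closedBall q R' → R ≤ R' + ε

lemma exists_isAlmostMinimalBall_of_isBounded {X : Set H} (hX : Bornology.IsBounded X)
    (hne : X.Nonempty) {ε : ℝ} (hε : 0 < ε) : ∃ p R, IsAlmostMinimalBall X ε R p := by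
  obtain ⟨x, hx⟩ := hne
  set S := {R | ∃ p, X ⊆ closedBall p R}
  have hS : S.Nonempty :=
    let ⟨r, hr⟩ := (isBounded_iff_subset_closedBall x).1 hX; ⟨r, x, hr⟩
  have hSbdd : BddBelow S := ⟨0, fun _ ⟨p, hp⟩ => dist_nonneg.trans (mem_closedBall.1 (hp hx))⟩
  obtain ⟨R, ⟨p, hp⟩, hR⟩ := exists_lt_of_csInf_lt hS (lt_add_of_pos_right (sInf S) hε)
  exact ⟨p, R, hp, fun q R' hq => by linarith [csInf_le hSbdd ⟨q, hq⟩]⟩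

lemma exists_isAlmostMinimalBall_of_finite {δ : ℝ} (hthin : ThinTriangles H δ)
    (hgeo : IsGeodesicSpace H) {X : Set H} (hfin : X.Finite) (hne : X.Nonempty) :
    ∃ p R, IsAlmostMinimalBall X δ R p := by
  obtain ⟨⟨y, z⟩, ⟨hy, hz⟩, hmax⟩ := Set.exists_max_image (X ×ˢ X)
    (fun a => dist a.1 a.2) (hfin.prod hfin) (hne.prod hne)
  obtain ⟨f, hf⟩ := hgeo y z
  refine ⟨f (dist y z / 2), dist y z / 2 + δ, fun s hs => ?_, fun q R' hq => ?_⟩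
  · have := hthin.dist_midpoint_le hgeo s hf (hmax (y, s) ⟨hy, hs⟩) (hmax (z, s) ⟨hz, hs⟩)
    rw [mem_closedBall']
    linarith
  · linarith [dist_triangle_right y z q, mem_closedBall.1 (hq hy), mem_closedBall.1 (hq hz)]

lemma IsAlmostMinimalBall.dist_le {δ ε R : ℝ} {X : Set H} {p q : H}
    (hthin : ThinTriangles H δ) (hgeo : IsGeodesicSpace H) (h : IsAlmostMinimalBall X ε R p)
    (hq : X ⊆ closedBall q R) : dist p q ≤ 2 * (δ + ε) := by
  obtain ⟨f, hf⟩ := hgeo p q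
  have := h.2 (f (dist p q / 2)) (R - dist p q / 2 + δ) fun s hs =>
    mem_closedBall'.2 <| hthin.dist_midpoint_le hgeo s hf
      (mem_closedBall'.1 (h.1 hs)) (mem_closedBall'.1 (hq hs))
  linarith

lemma subset_closedBall_smul {G : Type*} [SMul G H] {g : G} (hg : Isometry (fun p : H => g • p))
    {X : Set H} (hgX : g • X = X) {p : H} {R : ℝ} (h : X ⊆ closedBall p R) :
    X ⊆ closedBall (g • p) R := by
  rw [← hgX]
  rintro _ ⟨x, hx, rfl⟩
  rw [mem_closedBall, hg.dist_eq]
  exact h hx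

/-- Corollary 2.4 (equivariant choice of centers): if `G` acts isometrically on a
`δ`-hyperbolic geodesic space with minimal displacement `> 3δ`, then `G` acts freely on
the collection of finite nonempty subsets: `g • X = X` forces `g = 1`. -/
theorem free_action_on_finite_subsets {G H : Type} [Group G] [MetricSpace H]
    [MulAction G H] (hiso : ∀ g : G, Isometry (fun p : H => g • p))
    (δ : ℝ) (hhyp : IsDeltaHyperbolic H δ)
    (hdisp : ∀ g : G, g ≠ 1 → ∀ p : H, 3 * δ < dist (g • p) p)
    (X : Set H) (hfin : X.Finite) (hne : X.Nonempty)
    (g : G) (hgX : g • X = X) : g = 1 := by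
  by_contra hg
  obtain ⟨hgeo, hthin, -⟩ := hhyp
  obtain ⟨p, R, hball⟩ : ∃ p R, IsAlmostMinimalBall X (δ / 2) R p := by
    rcases (hthin.nonneg hgeo hne.some).lt_or_eq with hδ | rfl
    · exact exists_isAlmostMinimalBall_of_isBounded hfin.isBounded hne (half_pos hδ)
    · simpa using exists_isAlmostMinimalBall_of_finite hthin hgeo hfin hne
  have := hball.dist_le hthin hgeo (subset_closedBall_smul (hiso g) hgX hball.1)
  linarith [hdisp g hg p, dist_comm p (g • p)]
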